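/- arXiv:1906.06692 — 7 statements merged into one kernel-verified Lean document; each statement's English description precedes it below -/
import Mathlib

section
/- Let A be an associative ring, p a prime, and suppose A has characteristic p. For any a, b ∈ A, the (p-1)-fold iterate of the left adjoint map ad_L(a) : x ↦ a*x - x*a applied to b equals the sum ∑_{i=0}^{p-1} a^i * b * a^{p-1-i}. -/
open Finset

/-- In characteristic p, `(p-1).choose m = (-1)^m`. -/
lemma choose_cast_char (A : Type*) [Ring A] (p : ℕ) (hp : p.Prime) [CharP A p] :
    ∀ m, m ≤ p - 1 → (((p - 1).choose m : ℕ) : A) = (-1) ^ m := by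
  intro m
  induction m with
  | zero => simp
  | succ k ih =>
    intro hk
    have hk' : k ≤ p - 1 := Nat.le_of_succ_le hk
    have hp1 : p - 1 + 1 = p := Nat.succ_pred_eq_of_pos hp.pos
    have hpascal : (p - 1).choose k + (p - 1).choose (k + 1) = p.choose (k + 1) := by
      conv_rhs => rw [← hp1]
      rw [Nat.choose_succ_succ]
    have hdvd : p ∣ p.choose (k + 1) :=
      hp.dvd_choose_self (Nat.succ_ne_zero k) (by omega)
    have h0 : ((p.choose (k + 1) : ℕ) : A) = 0 :=
      (CharP.cast_eq_zero_iff A p _).mpr hdvd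
    have hsum : (((p - 1).choose k : ℕ) : A) + (((p - 1).choose (k + 1) : ℕ) : A) = 0 := by
      rw [← Nat.cast_add, hpascal, h0]
    have h2 : (((p - 1).choose (k + 1) : ℕ) : A) = -(((p - 1).choose k : ℕ) : A) :=
      eq_neg_of_add_eq_zero_right hsum
    rw [h2, ih hk', pow_succ, mul_neg_one]

theorem adL_pow_pred (A : Type*) [Ring A] (p : ℕ) (hp : p.Prime) [CharP A p]
    (a b : A) :
    (fun x => a * x - x * a)^[p - 1] b =
      ∑ i ∈ Finset.range p, a ^ i * b * a ^ (p - 1 - i) := by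
  set n := p - 1 with hn
  have hp1 : n + 1 = p := Nat.succ_pred_eq_of_pos hp.pos
  have hfun : (fun x : A => a * x - x * a) =
      ⇑(LinearMap.mulLeft ℤ a - LinearMap.mulRight ℤ a) := by
    funext x; simp
  rw [hfun, ← Module.End.pow_apply]
  have hcomm : Commute (LinearMap.mulLeft ℤ a) (-(LinearMap.mulRight ℤ a)) :=
    (LinearMap.commute_mulLeft_right a a).neg_right
  have hexp : (LinearMap.mulLeft ℤ a - LinearMap.mulRight ℤ a) ^ n =
      ∑ m ∈ range (n + 1), (LinearMap.mulLeft ℤ a) ^ m *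
        (-(LinearMap.mulRight ℤ a)) ^ (n - m) * (n.choose m : Module.End ℤ A) := by
    rw [sub_eq_add_neg, hcomm.add_pow]
  rw [hexp, hp1, LinearMap.sum_apply]
  refine Finset.sum_congr rfl fun m hm => ?_
  have hm' : m ≤ n := by
    rw [Finset.mem_range, ← hp1] at hm; omega
  have hL : ∀ x : A, ((LinearMap.mulLeft ℤ a) ^ m) x = a ^ m * x := by
    intro x; rw [LinearMap.pow_mulLeft]; rfl
  have hR : ∀ x : A, ((LinearMap.mulRight ℤ a) ^ (n - m)) x = x * a ^ (n - m) := by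
    intro x; rw [LinearMap.pow_mulRight]; rfl
  have hnegpow : (-(LinearMap.mulRight ℤ a)) ^ (n - m) =
      (-1 : ℤ) ^ (n - m) • (LinearMap.mulRight ℤ a) ^ (n - m) := by
    rw [neg_pow]; simp [Units.smul_def]
  have hterm : ((LinearMap.mulLeft ℤ a) ^ m * (-(LinearMap.mulRight ℤ a)) ^ (n - m) *
      (n.choose m : Module.End ℤ A)) b =
      ((-1 : ℤ) ^ (n - m) * (n.choose m : ℤ)) • (a ^ m * b * a ^ (n - m)) := by
    rw [Module.End.mul_apply, Module.End.mul_apply, Module.End.natCast_apply, hnegpow,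
      LinearMap.smul_apply, hR, hL]
    simp only [mul_smul, natCast_zsmul, mul_smul_comm, smul_mul_assoc, mul_assoc]
  rw [hterm, zsmul_eq_mul]
  push_cast
  rw [choose_cast_char A p hp m hm']
  have hone : (-1 : A) ^ (n - m) * (-1 : A) ^ m = 1 := by
    rw [← pow_add, Nat.sub_add_cancel hm']
    rcases hp.eq_two_or_odd' with h2 | hodd
    · subst h2
      have h20 : (1 : A) + 1 = 0 := by
        have := CharP.cast_eq_zero A 2
        rwa [Nat.cast_ofNat, ← one_add_one_eq_two] at this
      have hneg : (-1 : A) = 1 := neg_eq_of_add_eq_zero_left h20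
      rw [hneg, one_pow]
    · have heven : Even n := by
        have := Nat.Odd.sub_odd hodd odd_one
        simpa [hn] using this
      exact heven.neg_one_pow
  rw [hone, one_mul]
end

section
/- Let A be an associative algebra over a field k of prime characteristic p, with elements g, x satisfying g^n = 1 (p | n) and g*x - x*g = g*(1-g). Then the (p-1)-fold iterate of the right adjoint action of x on g satisfies (g)(ad_R x)^{p-1} = g - g^p, and the p-fold iterate satisfies (g)(ad_R x)^p = g*x - x*g. -/
open Finset

def Scoef (m j : ℕ) : ℤ :=
  ∑ i ∈ Finset.range j, (-1) ^ i * (i + 1) ^ m * ((j - 1).choose i)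

lemma Scoef_rec (m j : ℕ) :
    Scoef (m + 1) (j + 1) = (j + 1 : ℤ) * Scoef m (j + 1) - (j : ℤ) * Scoef m j := by
  cases j with
  | zero => simp [Scoef]
  | succ j' =>
    unfold Scoef
    simp only [Nat.add_sub_cancel]
    have hext : ∑ i ∈ Finset.range (j' + 1 + 1), (-1:ℤ) ^ i * (i + 1) ^ m * (j'.choose i) =
        ∑ i ∈ Finset.range (j' + 1), (-1:ℤ) ^ i * (i + 1) ^ m * (j'.choose i) := by
      rw [Finset.sum_range_succ, Nat.choose_eq_zero_of_lt (Nat.lt_succ_self j')]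
      simp
    rw [← hext, Finset.mul_sum, Finset.mul_sum, ← Finset.sum_sub_distrib]
    refine Finset.sum_congr rfl fun i hi => ?_
    have hii : i ≤ j' + 1 := Nat.lt_succ_iff.mp (Finset.mem_range.mp hi)
    have h2 : ((j'.choose i : ℤ)) * ((j':ℤ) + 1) = ((j'+1).choose i : ℤ) * ((j':ℤ) + 1 - i) := by
      have h := Nat.choose_mul_succ_eq j' i
      have := congrArg (fun t : ℕ => (t : ℤ)) h
      push_cast [Nat.cast_sub hii] at this
      linarith [this]
    push_cast
    linear_combination ((-1:ℤ)^i * ((i:ℤ)+1)^m) * h2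

lemma Scoef_vanish : ∀ m j : ℕ, m + 2 ≤ j → Scoef m j = 0 := by
  intro m
  induction m with
  | zero =>
    intro j hj
    obtain ⟨j', rfl⟩ : ∃ j', j = j' + 1 := ⟨j - 1, by omega⟩
    have := Int.alternating_sum_range_choose (n := j')
    rw [if_neg (by omega)] at this
    simpa [Scoef] using this
  | succ m ih =>
    intro j hj
    obtain ⟨j', rfl⟩ : ∃ j', j = j' + 1 := ⟨j - 1, by omega⟩
    rw [Scoef_rec, ih j' (by omega), ih (j' + 1) (by omega)]
    ring

lemma adR_pow {A : Type*} [Ring A] (g x : A) (hgx : g * x - x * g = g * (1 - g)) (j : ℕ) :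
    g ^ j * x - x * g ^ j = (j : A) * g ^ j - (j : A) * g ^ (j + 1) := by
  induction j with
  | zero => simp
  | succ j ih =>
    have h1 : g ^ (j+1) * x - x * g ^ (j+1)
        = g * (g ^ j * x - x * g ^ j) + (g * x - x * g) * g ^ j := by
      rw [pow_succ']
      noncomm_ring
    rw [h1, ih, hgx]
    have hc : ∀ y : A, g * ((j : A) * y) = (j : A) * (g * y) := fun y => by
      rw [← mul_assoc, ((Nat.cast_commute j g).symm).eq, mul_assoc]
    rw [mul_sub, hc, hc]
    have e1 : g * g ^ j = g ^ (j+1) := (pow_succ' g j).symm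
    have e2 : g * g ^ (j+1) = g ^ (j+2) := (pow_succ' g (j+1)).symm
    have e3 : g * g * g ^ j = g ^ (j + 2) := by rw [mul_assoc, e1, e2]
    rw [e1, e2, mul_sub, mul_one, sub_mul, e1, e3]
    push_cast
    noncomm_ring

lemma adR_iter {A : Type*} [Ring A] (g x : A) (hgx : g * x - x * g = g * (1 - g)) (m : ℕ) :
    (fun a => a * x - x * a)^[m] g
      = ∑ j ∈ Finset.range (m + 2), (Scoef m j : A) * g ^ j := by
  induction m with
  | zero =>
    simp only [Function.iterate_zero, id_eq]
    rw [show (2:ℕ) = 0 + 1 + 1 from rfl, Finset.sum_range_succ, Finset.sum_range_succ]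
    simp [Scoef]
  | succ m ih =>
    rw [Function.iterate_succ_apply', ih]
    rw [Finset.sum_mul, Finset.mul_sum, ← Finset.sum_sub_distrib]
    have hterm : ∀ j ∈ Finset.range (m + 2),
        (Scoef m j : A) * g ^ j * x - x * ((Scoef m j : A) * g ^ j)
          = ((j : A) * (Scoef m j : A)) * g ^ j - ((j : A) * (Scoef m j : A)) * g ^ (j+1) := by
      intro j hj
      have hcx : x * ((Scoef m j : A) * g ^ j) = (Scoef m j : A) * (x * g ^ j) := by
        rw [← mul_assoc, ← (Int.cast_commute (Scoef m j) x).eq, mul_assoc]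
      rw [hcx, mul_assoc, ← mul_sub, adR_pow g x hgx j, mul_sub]
      have hc : ∀ y : A, (Scoef m j : A) * ((j:A) * y) = ((j:A) * (Scoef m j : A)) * y := by
        intro y
        rw [← mul_assoc, ← (Int.cast_commute (Scoef m j) ((j:ℕ):A)).eq]
      rw [hc, hc]
    rw [Finset.sum_congr rfl hterm, Finset.sum_sub_distrib]
    have hR : ∑ j ∈ Finset.range (m + 1 + 2), (Scoef (m+1) j : A) * g ^ j
        = ∑ j ∈ Finset.range (m + 2), ((((j:ℤ) + 1) * Scoef m (j+1) : ℤ) : A) * g ^ (j+1)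
          - ∑ j ∈ Finset.range (m + 2), (((j:ℤ) * Scoef m j : ℤ) : A) * g ^ (j+1) := by
      rw [show m + 1 + 2 = (m + 2) + 1 from rfl,
        Finset.sum_range_succ' (f := fun j => (Scoef (m+1) j : A) * g ^ j)]
      have h0 : (Scoef (m+1) 0 : A) * g ^ 0 = 0 := by simp [Scoef]
      rw [h0, add_zero, ← Finset.sum_sub_distrib]
      refine Finset.sum_congr rfl fun j hj => ?_
      rw [Scoef_rec]
      push_cast
      noncomm_ring
    rw [hR]
    congr 1
    rw [Finset.sum_range_succ' (f := fun j => ((j:A) * (Scoef m j : A)) * g ^ j)]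
    simp only [Nat.cast_zero, zero_mul, mul_zero, add_zero]
    rw [Finset.sum_range_succ (f := fun j => ((((j:ℤ)+1) * Scoef m (j+1) : ℤ) : A) * g ^ (j+1))]
    rw [Scoef_vanish m (m + 2) le_rfl]
    push_cast
    simp only [mul_zero, zero_mul, add_zero]
    refine Finset.sum_congr rfl fun j hj => ?_
    push_cast
    ring_nf

lemma cast_pow_eq_one (p : ℕ) [Fact p.Prime] (i : ℕ) (hi : i + 1 < p) :
    ((i : ZMod p) + 1) ^ (p - 1) = 1 := by
  have hne : ((i : ZMod p) + 1) ≠ 0 := by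
    have h : (((i + 1 : ℕ)) : ZMod p) ≠ 0 := by
      rw [Ne, ZMod.natCast_eq_zero_iff]
      intro hdvd
      have := Nat.le_of_dvd (by omega) hdvd
      omega
    push_cast at h
    exact h
  exact ZMod.pow_card_sub_one_eq_one hne

lemma Scoef_mod_lt (p : ℕ) [Fact p.Prime] (j : ℕ) (h1 : 1 ≤ j) (hj : j < p) :
    (Scoef (p-1) j : ZMod p) = if j = 1 then 1 else 0 := by
  obtain ⟨j', rfl⟩ : ∃ j', j = j' + 1 := ⟨j - 1, by omega⟩
  have key : (Scoef (p-1) (j'+1) : ZMod p)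
      = ∑ i ∈ Finset.range (j'+1), (-1:ZMod p)^i * ((j'.choose i : ℕ) : ZMod p) := by
    unfold Scoef
    push_cast
    refine Finset.sum_congr rfl fun i hi => ?_
    have hi' : i < j' + 1 := Finset.mem_range.mp hi
    rw [cast_pow_eq_one p i (by omega)]
    simp [Nat.add_sub_cancel]
  rw [key]
  have h := Int.alternating_sum_range_choose (n := j')
  have h2 := congrArg (fun t : ℤ => (t : ZMod p)) h
  push_cast at h2
  rw [h2]
  by_cases hz : j' = 0 <;> simp [hz]

lemma Scoef_mod_p (p : ℕ) [Fact p.Prime] :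
    (Scoef (p-1) p : ZMod p) = -1 := by
  have hp2 : 2 ≤ p := (Fact.out : p.Prime).two_le
  obtain ⟨q, rfl⟩ : ∃ q, p = q + 1 := ⟨p - 1, by omega⟩
  have key : (Scoef (q+1-1) (q+1) : ZMod (q+1))
      = ∑ i ∈ Finset.range (q+1), (-1:ZMod (q+1))^i * ((q.choose i : ℕ) : ZMod (q+1))
        - (-1:ZMod (q+1))^q * ((q.choose q : ℕ) : ZMod (q+1)) := by
    unfold Scoef
    push_cast
    rw [Finset.sum_range_succ]
    have hlast : ((q : ZMod (q+1)) + 1) ^ q = 0 := by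
      have : ((q : ZMod (q+1)) + 1) = ((q+1 : ℕ) : ZMod (q+1)) := by push_cast; ring
      rw [this, ZMod.natCast_self, zero_pow (by omega)]
    
    rw [hlast]
    rw [Finset.sum_range_succ (f := fun i => (-1:ZMod (q+1))^i * ((q.choose i : ℕ) : ZMod (q+1)))]
    have hcongr : ∀ i ∈ Finset.range q,
        (-1:ZMod (q+1))^i * ((i:ZMod (q+1)) + 1)^q * ((q.choose i : ℕ) : ZMod (q+1))
          = (-1:ZMod (q+1))^i * ((q.choose i : ℕ) : ZMod (q+1)) := by
      intro i hi
      have hi' : i < q := Finset.mem_range.mp hi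
      have := cast_pow_eq_one (q+1) i (by omega)
      rw [Nat.add_sub_cancel] at this
      rw [this, mul_one]
    rw [Finset.sum_congr rfl hcongr]
    ring
  rw [key]
  have h := Int.alternating_sum_range_choose (n := q)
  rw [if_neg (by omega)] at h
  have h2 := congrArg (fun t : ℤ => (t : ZMod (q+1))) h
  push_cast at h2
  rw [h2, Nat.choose_self]
  have h3 : (-1 : ZMod (q+1)) ^ (q+1) = -1 := neg_one_pow_char (ZMod (q+1)) (q+1)
  rw [pow_succ] at h3
  push_cast
  linear_combination h3


theorem adR_on_g (k : Type*) [Field k] (p n : ℕ) (hp : p.Prime) [CharP k p]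
    (hpn : p ∣ n)
    (A : Type*) [Ring A] [Algebra k A] (g x : A)
    (hg : g ^ n = 1) (hgx : g * x - x * g = g * (1 - g)) :
    (fun a => a * x - x * a)^[p - 1] g = g - g ^ p ∧
      (fun a => a * x - x * a)^[p] g = g * x - x * g := by
  haveI := Fact.mk hp
  have hp2 : 2 ≤ p := hp.two_le
  have hpA : (p : A) = 0 := by
    calc (p : A) = algebraMap k A (p : k) := (map_natCast (algebraMap k A) p).symm
    _ = algebraMap k A 0 := by rw [CharP.cast_eq_zero k p]
    _ = 0 := map_zero _
  have castA : ∀ z : ℤ, ((z : ℤ) : ZMod p) = 0 → ((z : ℤ) : A) = 0 := by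
    intro z hz
    rw [ZMod.intCast_zmod_eq_zero_iff_dvd] at hz
    obtain ⟨c, rfl⟩ := hz
    push_cast
    rw [hpA, zero_mul]
  have h1 : (fun a => a * x - x * a)^[p - 1] g = g - g ^ p := by
    rw [adR_iter g x hgx (p-1), show p - 1 + 2 = p + 1 by omega]
    have hterm : ∀ j ∈ Finset.range (p + 1),
        ((Scoef (p-1) j : ℤ) : A) * g ^ j
          = (if j = 1 then g else 0) + (if j = p then -(g ^ p) else 0) := by
      intro j hj
      have hj' : j ≤ p := by have := Finset.mem_range.mp hj; omega
      by_cases hj1 : j = 1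
      · subst hj1
        rw [if_pos rfl, if_neg (by omega)]
        have hS1 : Scoef (p-1) 1 = 1 := by simp [Scoef]
        rw [hS1]
        push_cast
        simp
      · by_cases hjp : j = p
        · rw [hjp, if_neg (by omega : ¬ p = 1), if_pos rfl, zero_add]
          have hz : ((Scoef (p-1) p + 1 : ℤ) : ZMod p) = 0 := by
            push_cast [Scoef_mod_p p]
            ring
          have hA := castA _ hz
          push_cast at hA
          have hS : ((Scoef (p-1) p : ℤ) : A) = -1 := eq_neg_of_add_eq_zero_left hA
          rw [hS, neg_one_mul]
        · rw [if_neg hj1, if_neg hjp, add_zero]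
          have hz : ((Scoef (p-1) j : ℤ) : ZMod p) = 0 := by
            by_cases hj0 : j = 0
            · subst hj0; simp [Scoef]
            · rw [Scoef_mod_lt p j (by omega) (by omega), if_neg hj1]
          rw [castA _ hz, zero_mul]
    rw [Finset.sum_congr rfl hterm, Finset.sum_add_distrib,
      Finset.sum_ite_eq' (Finset.range (p+1)) 1 (fun _ => g),
      Finset.sum_ite_eq' (Finset.range (p+1)) p (fun _ => -(g^p)),
      if_pos (Finset.mem_range.mpr (by omega : 1 < p + 1)),
      if_pos (Finset.mem_range.mpr (by omega : p < p + 1)), ← sub_eq_add_neg]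
  refine ⟨h1, ?_⟩
  have hpp : p = (p - 1) + 1 := by omega
  have hgp : g ^ p * x = x * g ^ p := by
    have h := adR_pow g x hgx p
    rw [hpA, zero_mul, zero_mul, sub_zero] at h
    exact sub_eq_zero.mp h
  calc (fun a => a * x - x * a)^[p] g
      = (fun a => a * x - x * a) ((fun a => a * x - x * a)^[p-1] g) := by
        conv_lhs => rw [hpp, Function.iterate_succ_apply']
    _ = ((fun a => a * x - x * a)^[p-1] g) * x - x * ((fun a => a * x - x * a)^[p-1] g) := rfl
    _ = (g - g ^ p) * x - x * (g - g ^ p) := by rw [h1]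
    _ = g * x - x * g := by rw [sub_mul, mul_sub, hgp]; abel
end

section
/- Let k be a field of prime characteristic p and A an associative k-algebra with elements g, x, y satisfying g^{pk} = 1, g x - x g = λ1(g - g^2), g y - y g = λ2(g - g^{μ+1}), x^p = λ1 x, y^p = λ2 y, and x y - y x + μ λ1 y - λ2 x = λ3(1 - g^{μ+1}), where λ1, λ2 ∈ {0,1}, λ3 ∈ k, μ ∈ {1,...,pk-1}. Then for every n ≥ 2, (x)(ad_R y)^n = λ2^{n-1} (x)(ad_R y) - λ3 ∑_{i=0}^{n-2} λ2^i (g^{μ+1})(ad_R y)^{n-1-i}. -/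
/-!
Right multiplication minus left multiplication by `y` is a `k`-linear map killing `1` and `y`.
Applying it to the relation `(x)(ad_R y) = λ3 (1 - g^{μ+1}) + λ2 x - μ λ1 y` gives the recurrence
`(x)(ad_R y)^2 = λ2 (x)(ad_R y) - λ3 (g^{μ+1})(ad_R y)`, and unrolling this first-order recurrence
under the linear iterates of `ad_R y` gives the formula.
-/

open Finset

theorem Module.End.iterate_succ_apply_of_apply_apply_eq {R M : Type*} [CommRing R]
    [AddCommGroup M] [Module R M] (f : Module.End R M) {a b : R} {x z : M}
    (h : f (f x) = a • f x - b • f z) (n : ℕ) :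
    f^[n + 1] x = a ^ n • f x - b • ∑ i ∈ range n, a ^ i • f^[n - i] z := by
  induction n with
  | zero => simp
  | succ n ih =>
    have hlin : ∀ u v : M, f^[n] (a • u - b • v) = a • f^[n] u - b • f^[n] v := by
      simp [← Module.End.coe_pow]
    calc f^[n + 2] x = f^[n] (f (f x)) := Function.iterate_add_apply f n 2 x
      _ = a • f^[n + 1] x - b • f^[n + 1] z := by
        rw [h, hlin, ← Function.iterate_succ_apply f n, ← Function.iterate_succ_apply f n]
      _ = a ^ (n + 1) • f x - b • ∑ i ∈ range (n + 1), a ^ i • f^[n + 1 - i] z := by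
        rw [ih, sum_range_succ']
        simp only [Nat.add_sub_add_right, pow_succ', mul_smul, smul_sub, smul_add, smul_sum,
          smul_comm a b]
        simp only [pow_zero, one_smul, Nat.sub_zero]
        abel

theorem adR_iterate_formula_general (k : Type*) [Field k] (μ : ℕ)
    (A : Type*) [Ring A] [Algebra k A] (g x y : A)
    (lam1 lam2 : k)
    (lam3 : k)
    (hxy : x * y - y * x + (μ • lam1) • y - lam2 • x = lam3 • (1 - g ^ (μ + 1))) :
    ∀ n : ℕ, 2 ≤ n →
      (fun a => a * y - y * a)^[n] x =
        lam2 ^ (n - 1) • (fun a => a * y - y * a) x -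
          lam3 • ∑ i ∈ Finset.range (n - 1),
            lam2 ^ i • (fun a => a * y - y * a)^[n - 1 - i] (g ^ (μ + 1)) := by
  set adR : Module.End k A := LinearMap.mulRight k y - LinearMap.mulLeft k y
  have hadR : (fun a => a * y - y * a) = ⇑adR := by ext; simp [adR]
  have hadR_x : adR x = lam3 • (1 - g ^ (μ + 1)) + lam2 • x - (μ • lam1) • y := by
    simp only [adR, LinearMap.sub_apply, LinearMap.mulRight_apply, LinearMap.mulLeft_apply]
    rw [← hxy]; abel
  have hadR_adR_x : adR (adR x) = lam2 • adR x - lam3 • adR (g ^ (μ + 1)) := by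
    have hadR_one : adR 1 = 0 := by simp [adR]
    have hadR_y : adR y = 0 := by simp [adR]
    conv_lhs => rw [hadR_x]
    rw [map_sub, map_add, map_smul, map_smul, map_smul, map_sub, hadR_one, hadR_y]
    module
  intro n hn
  obtain ⟨m, rfl⟩ : ∃ m, n = m + 1 := ⟨n - 1, by omega⟩
  rw [hadR]
  simpa using adR.iterate_succ_apply_of_apply_apply_eq hadR_adR_x m

theorem adR_iterate_formula (k : Type*) [Field k] (p : ℕ) (hp : p.Prime) [CharP k p]
    (k' : ℕ) (hk' : k' ≠ 0) (μ : ℕ) (hμ : 1 ≤ μ ∧ μ ≤ p * k' - 1)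
    (A : Type*) [Ring A] [Algebra k A] (g x y : A)
    (lam1 lam2 : k) (hl1 : lam1 = 0 ∨ lam1 = 1) (hl2 : lam2 = 0 ∨ lam2 = 1)
    (lam3 : k)
    (hg : g ^ (p * k') = 1)
    (hgx : g * x - x * g = lam1 • (g - g ^ 2))
    (hgy : g * y - y * g = lam2 • (g - g ^ (μ + 1)))
    (hxp : x ^ p = lam1 • x) (hyp : y ^ p = lam2 • y)
    (hxy : x * y - y * x + (μ • lam1) • y - lam2 • x = lam3 • (1 - g ^ (μ + 1))) :
    ∀ n : ℕ, 2 ≤ n →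
      (fun a => a * y - y * a)^[n] x =
        lam2 ^ (n - 1) • (fun a => a * y - y * a) x -
          lam3 • ∑ i ∈ Finset.range (n - 1),
            lam2 ^ i • (fun a => a * y - y * a)^[n - 1 - i] (g ^ (μ + 1)) :=
  adR_iterate_formula_general k μ A g x y lam1 lam2 lam3 hxy
end

section
/- Let k be a field of prime characteristic p and A an associative k-algebra with elements g, x, y satisfying g^p = 1, g x - x g = λ1(g - g^2), g y - y g = λ2(g - g^{μ+1}), x^p = λ1 x, y^p = λ2 y, and x y - y x + μ λ1 y - λ2 x = λ3(1 - g^{μ+1}), where λ1, λ2 ∈ {0,1}, λ3 ∈ k, 1 ≤ μ ≤ p-1. Then (x)(ad_R y)^p = λ2^{p-1} (x)(ad_R y). -/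
theorem adR_iterate_p (k : Type*) [Field k] (p : ℕ) (hp : p.Prime) [CharP k p]
    (μ : ℕ) (hμ : 1 ≤ μ ∧ μ ≤ p - 1)
    (A : Type*) [Ring A] [Algebra k A] (g x y : A)
    (lam1 lam2 : k) (hl1 : lam1 = 0 ∨ lam1 = 1) (hl2 : lam2 = 0 ∨ lam2 = 1)
    (lam3 : k)
    (hg : g ^ p = 1)
    (hgx : g * x - x * g = lam1 • (g - g ^ 2))
    (hgy : g * y - y * g = lam2 • (g - g ^ (μ + 1)))
    (hxp : x ^ p = lam1 • x) (hyp : y ^ p = lam2 • y)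
    (hxy : x * y - y * x + (μ • lam1) • y - lam2 • x = lam3 • (1 - g ^ (μ + 1))) :
    (fun a => a * y - y * a)^[p] x = lam2 ^ (p - 1) • (x * y - y * x) := by
  haveI : Fact p.Prime := ⟨hp⟩
  rcases subsingleton_or_nontrivial A with hA | hA
  · exact Subsingleton.elim _ _
  haveI : Nontrivial (Module.End k A) := by
    refine ⟨1, 0, fun h => ?_⟩
    have := congrArg (fun f : Module.End k A => f 1) h
    simp at this
  haveI : CharP (Module.End k A) p :=
    charP_of_injective_ringHom (algebraMap k (Module.End k A)).injective p
  have hcomm : Commute (LinearMap.mulRight k y) (LinearMap.mulLeft k y) :=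
    (LinearMap.commute_mulLeft_right y y).symm
  have key : (LinearMap.mulRight k y - LinearMap.mulLeft k y) ^ p
      = LinearMap.mulRight k (y ^ p) - LinearMap.mulLeft k (y ^ p) := by
    rw [sub_pow_char_of_commute p hcomm, LinearMap.pow_mulRight, LinearMap.pow_mulLeft]
  have hfun : (fun a : A => a * y - y * a)
      = fun a => (LinearMap.mulRight k y - LinearMap.mulLeft k y) a := by
    funext a; simp
  have hiter : (fun a : A => a * y - y * a)^[p] x
      = ((LinearMap.mulRight k y - LinearMap.mulLeft k y) ^ p) x := by
    rw [hfun, Module.End.pow_apply]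
  rw [hiter, key]
  have hl : (LinearMap.mulRight k (y ^ p) - LinearMap.mulLeft k (y ^ p)) x
      = x * y ^ p - y ^ p * x := by simp
  rw [hl, hyp, mul_smul_comm, smul_mul_assoc, ← smul_sub]
  rcases hl2 with h | h
  · simp [h, zero_pow (Nat.sub_ne_zero_of_lt hp.one_lt)]
  · simp [h]
end

section
/- Let H be a bialgebra over a field k, g a group-like element commuting with h (another group-like), and x ∈ H with Δ(x) = x ⊗ 1 + g ⊗ x and Δ(y) = y ⊗ 1 + g ⊗ y for another such element y. Suppose g x - x g = λ1 (g - g^2) and g y - y g = λ2 (g - g^2) for scalars λ1, λ2. Then the element w = x y - y x - λ2 x + λ1 y satisfies Δ(w) = w ⊗ 1 + g^2 ⊗ w, i.e. w is (1, g^2)-skew primitive. -/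
open TensorProduct

theorem commutator_skewPrimitive (k : Type*) [Field k]
    (H : Type*) [Ring H] [Bialgebra k H] (g x y : H) (lam1 lam2 : k)
    (hg : Coalgebra.comul (R := k) g = g ⊗ₜ[k] g)
    (hεg : Coalgebra.counit (R := k) g = 1)
    (hx : Coalgebra.comul (R := k) x = x ⊗ₜ[k] 1 + g ⊗ₜ[k] x)
    (hy : Coalgebra.comul (R := k) y = y ⊗ₜ[k] 1 + g ⊗ₜ[k] y)
    (hgx : g * x - x * g = lam1 • (g - g ^ 2))
    (hgy : g * y - y * g = lam2 • (g - g ^ 2)) :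
    Coalgebra.comul (R := k) (x * y - y * x - lam2 • x + lam1 • y) =
      (x * y - y * x - lam2 • x + lam1 • y) ⊗ₜ[k] 1 +
        (g ^ 2) ⊗ₜ[k] (x * y - y * x - lam2 • x + lam1 • y) := by
  have hxg : x * g = g * x - lam1 • (g - g ^ 2) := by rw [← hgx]; abel
  have hyg : y * g = g * y - lam2 • (g - g ^ 2) := by rw [← hgy]; abel
  simp only [map_add, map_sub, map_smul, Bialgebra.comul_mul, hx, hy, hg]
  simp only [add_mul, mul_add, Algebra.TensorProduct.tmul_mul_tmul, mul_one, one_mul]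
  rw [hxg, hyg]
  simp only [pow_two, smul_sub, sub_tmul, tmul_sub, smul_tmul', tmul_smul, add_tmul,
    tmul_add, smul_add]
  abel
end

section
/- Let H be a bialgebra over a field k of characteristic 2, g a group-like element, and x ∈ H with Δ(x) = x ⊗ 1 + g ⊗ x and g x - x g = λ (g - g^2) for λ ∈ k. Then Δ(x²) = x² ⊗ 1 + λ(g - g²) ⊗ x + g² ⊗ x², so x² - λ x is (1, g²)-skew primitive; in particular, if g² = 1 then x² - λ x is primitive. -/
open TensorProduct

theorem comul_sq_char_two (k : Type*) [Field k] [CharP k 2]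
    (H : Type*) [Ring H] [Bialgebra k H] (g x : H) (lam : k)
    (hg : Coalgebra.comul (R := k) g = g ⊗ₜ[k] g)
    (hεg : Coalgebra.counit (R := k) g = 1)
    (hx : Coalgebra.comul (R := k) x = x ⊗ₜ[k] 1 + g ⊗ₜ[k] x)
    (hgx : g * x - x * g = lam • (g - g ^ 2)) :
    Coalgebra.comul (R := k) (x ^ 2) =
        (x ^ 2) ⊗ₜ[k] 1 + lam • ((g - g ^ 2) ⊗ₜ[k] x) + (g ^ 2) ⊗ₜ[k] (x ^ 2) ∧
      Coalgebra.comul (R := k) (x ^ 2 - lam • x) =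
        (x ^ 2 - lam • x) ⊗ₜ[k] 1 + (g ^ 2) ⊗ₜ[k] (x ^ 2 - lam • x) := by
  have h2 : (2 : k) = 0 := CharTwo.two_eq_zero
  have hH : ∀ h : H ⊗[k] H, h + h = 0 := by
    intro h
    have : ((1 : k) + (1 : k)) • h = h + h := by rw [add_smul, one_smul]
    rw [← this, show ((1 : k) + (1 : k)) = 2 by norm_num, h2, zero_smul]
  have hmul : Coalgebra.comul (R := k) (x ^ 2)
      = Coalgebra.comul (R := k) x * Coalgebra.comul (R := k) x := by
    rw [pow_two]
    simpa using (Bialgebra.comulAlgHom k H).map_mul x x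
  have hxg : g * x = lam • (g - g ^ 2) + x * g := sub_eq_iff_eq_add.mp hgx
  have h0 : (2 : ℤ) • ((x * g) ⊗ₜ[k] x) = 0 := by rw [two_smul]; exact hH _
  have key : Coalgebra.comul (R := k) (x ^ 2) =
      (x ^ 2) ⊗ₜ[k] 1 + lam • ((g - g ^ 2) ⊗ₜ[k] x) + (g ^ 2) ⊗ₜ[k] (x ^ 2) := by
    rw [hmul, hx]
    simp only [pow_two, mul_add, add_mul, Algebra.TensorProduct.tmul_mul_tmul, mul_one,
      one_mul, hxg]
    rw [add_tmul, smul_tmul']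
    abel_nf
    rw [h0]
    abel
  refine ⟨key, ?_⟩
  rw [map_sub, map_smul, key, hx]
  simp only [TensorProduct.smul_tmul', smul_sub, smul_add, sub_tmul, tmul_sub, tmul_smul]
  abel
end

section
/- Let k be a field of characteristic 2 and let A = k⟨g, x⟩/(g⁸ - 1, g x - x g - g(1 - g^μ), x² - μ·x) for μ ∈ {1, 4} (where μ·x means μ mod 2 times x, i.e. x for μ=1 and 0 for μ=4). Then A has dimension 16 over k, with basis {g^i x^j : 0 ≤ i ≤ 7, 0 ≤ j ≤ 1}. -/
/-- The defining relations of `k⟨g,x⟩/(g⁸ - 1, gx - xg - g(1 - g^μ), x² - (μ mod 2)x)`: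
generator `0` is `g`, generator `1` is `x`. -/
inductive Rel17 (k : Type*) [Field k] (μ : ℕ) :
    FreeAlgebra k (Fin 2) → FreeAlgebra k (Fin 2) → Prop
  | gord : Rel17 k μ (FreeAlgebra.ι k 0 ^ 8) 1
  | comm : Rel17 k μ (FreeAlgebra.ι k 0 * FreeAlgebra.ι k 1 -
      FreeAlgebra.ι k 1 * FreeAlgebra.ι k 0)
      (FreeAlgebra.ι k 0 * (1 - FreeAlgebra.ι k 0 ^ μ))
  | xsq : Rel17 k μ (FreeAlgebra.ι k 1 ^ 2) ((μ % 2) • FreeAlgebra.ι k 1)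

/-!
The relations let one rewrite every word in `g, x` as a combination of the monomials `g^i x^j`
(`i < 8`, `j < 2`): `x g = g x - g + g^(μ+1)`, `x² = (μ mod 2) x` and `g⁸ = 1`.

For their independence, let `R = k[X]/(X⁸ - 1)` and let `D` be the derivation of `R` with
`D X = X^(μ+1) - X`; it exists because `(X⁸ - 1)' = 8 X⁷ = 0` in characteristic two. There
`D ∘ D` is again a derivation, so it is determined by its value at `X`, which shows
`D ∘ D = (μ mod 2) D` for `μ ∈ {1, 4}`. This is what makes `R ⊕ R x = R[x; D]/(x² - (μ mod 2) x)`
an algebra. Letting `g` act by `X` and `x` by left multiplication by `x` turns it into a module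
over the quotient, in which `g^i x^j · 1 = X^i x^j`; these sixteen vectors are independent.
-/

open Polynomial

namespace Derivation

variable {R A : Type*} [CommRing R] [CommRing A] [Algebra R A]

/-- In characteristic two the cross terms `2 D a D b` of `D (D (a * b))` vanish. -/
def compSelf (D : Derivation R A A) (h2 : (2 : A) = 0) : Derivation R A A :=
  mk' (D.toLinearMap ∘ₗ D.toLinearMap) fun a b => by
    change D (D (a * b)) = a * D (D b) + b * D (D a)
    simp only [leibniz, map_add, smul_eq_mul]
    linear_combination D a * D b * h2

@[simp]
theorem compSelf_apply (D : Derivation R A A) (h2 : (2 : A) = 0) (a : A) :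
    D.compSelf h2 a = D (D a) := rfl

end Derivation

namespace AdjoinRoot

variable {k : Type*} [CommRing k] {f : k[X]}

theorem derivation_ext {M : Type*} [AddCommGroup M] [Module (AdjoinRoot f) M] [Module k M]
    [IsScalarTower k (AdjoinRoot f) M] {D₁ D₂ : Derivation k (AdjoinRoot f) M}
    (h : D₁ (root f) = D₂ (root f)) : D₁ = D₂ :=
  Derivation.ext_of_adjoin_eq_top _ adjoinRoot_eq_top (Set.eqOn_singleton.2 h)

/-- Descends from the derivation `p ↦ p' * h` of `k[X]`, which maps `(f)` into `(f)`. -/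
noncomputable def mkDerivation (h : k[X]) (hf : f ∣ derivative f * h) :
    Derivation k (AdjoinRoot f) (AdjoinRoot f) :=
  Derivation.liftOfSurjective (f := mkₐ f) mk_surjective (d := Polynomial.mkDerivation k h)
    fun p hp => by
      obtain ⟨q, rfl⟩ := mk_eq_zero.1 hp
      rw [coe_mkₐ, mk_eq_zero, Polynomial.mkDerivation_apply, smul_eq_mul, derivative_mul,
        add_mul, mul_right_comm]
      exact dvd_add (hf.mul_right q) ((dvd_mul_right f _).mul_right h)

@[simp]
theorem mkDerivation_root (h : k[X]) (hf : f ∣ derivative f * h) :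
    mkDerivation h hf (root f) = mk f h := by
  rw [mkDerivation, ← mk_X, ← coe_mkₐ]
  exact (Derivation.liftOfRightInverse_apply _ _ X).trans (by rw [Polynomial.mkDerivation_X])

theorem linearIndependent_root_pow (hf : f.Monic) :
    LinearIndependent k (fun i : Fin f.natDegree => root f ^ (i : ℕ)) := by
  have := (powerBasis' hf).basis.linearIndependent
  simp only [PowerBasis.coe_basis, powerBasis'_gen] at this
  exact this

end AdjoinRoot

namespace Derivation

variable {k R : Type*} [CommRing k] [CommRing R] [Algebra k R] (D : Derivation k R R) (ε : k)

/-- Left multiplication by `x` on `R[x; D] / (x² - ε x) = R ⊕ R x`, in the coordinates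
`(r₀, r₁) ↦ r₀ + r₁ x`; it is computed from `x r = r x + D r`. -/
def xAction : Module.End k (R × R) where
  toFun r := (D r.1, r.1 + D r.2 + ε • r.2)
  map_add' r s := by
    simp only [Prod.fst_add, Prod.snd_add, map_add, smul_add, Prod.mk_add_mk]
    abel_nf
  map_smul' c r := by simp [smul_add, smul_comm ε c]

@[simp]
theorem xAction_apply (r : R × R) : D.xAction ε r = (D r.1, r.1 + D r.2 + ε • r.2) := rfl

theorem toModuleEnd_mul_xAction_sub (a : R) :
    Module.toModuleEnd k (R × R) a * D.xAction ε - D.xAction ε * Module.toModuleEnd k (R × R) a =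
      -Module.toModuleEnd k (R × R) (D a) := by
  refine LinearMap.ext fun r => Prod.ext ?_ ?_ <;>
    simp [leibniz, Algebra.smul_def] <;> ring

theorem xAction_sq (h2 : (2 : R) = 0) (hD : ∀ r, D (D r) = ε • D r) :
    D.xAction ε ^ 2 = ε • D.xAction ε := by
  refine LinearMap.ext fun r => Prod.ext ?_ ?_ <;> simp [sq, hD, Algebra.smul_def]
  linear_combination (D r.1 + algebraMap k R ε * D r.2) * h2

end Derivation

theorem two_eq_zero_of_charTwo (k A : Type*) [CommRing k] [CharP k 2] [Semiring A]
    [Algebra k A] : (2 : A) = 0 := by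
  rw [← map_ofNat (algebraMap k A) 2, CharTwo.two_eq_zero, map_zero]

theorem Submodule.span_eq_top_of_mul_mem {k A : Type*} [CommSemiring k] [Semiring A]
    [Algebra k A] {s T : Set A} (hs : Algebra.adjoin k s = ⊤) (h1 : 1 ∈ span k T)
    (hmul : ∀ t ∈ T, ∀ a ∈ s, t * a ∈ span k T) : span k T = ⊤ := by
  set S := span k T
  have mul_gen : ∀ a ∈ s, S ≤ S.comap (LinearMap.mulRight k a) := fun a ha =>
    span_le.2 fun t ht => hmul t ht a ha
  have mul_mem : ∀ a, ∀ t ∈ S, t * a ∈ S := fun a => by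
    induction (hs ▸ Algebra.mem_top : a ∈ Algebra.adjoin k s) using Algebra.adjoin_induction with
    | mem a ha => exact fun t ht => mul_gen a ha ht
    | algebraMap c =>
      intro t ht
      rw [← Algebra.commutes, ← Algebra.smul_def]
      exact S.smul_mem c ht
    | add a b _ _ ha hb =>
      intro t ht
      rw [mul_add]
      exact S.add_mem (ha t ht) (hb t ht)
    | mul a b _ _ ha hb =>
      intro t ht
      rw [← mul_assoc]
      exact hb _ (ha t ht)
  exact eq_top_iff.2 fun a _ => one_mul a ▸ mul_mem a 1 h1

theorem RingQuot.adjoin_range_mkAlgHom_ι {k X : Type*} [CommSemiring k]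
    (r : FreeAlgebra k X → FreeAlgebra k X → Prop) :
    Algebra.adjoin k (Set.range fun i => mkAlgHom k r (FreeAlgebra.ι k i)) = ⊤ := by
  rw [Set.range_comp', ← AlgHom.map_adjoin, FreeAlgebra.adjoin_range_ι, Algebra.map_top,
    AlgHom.range_eq_top]
  exact mkAlgHom_surjective k r

namespace Rel17

section Spanning

variable (k : Type*) [Field k] (μ : ℕ)

noncomputable def g : RingQuot (Rel17 k μ) := RingQuot.mkAlgHom k (Rel17 k μ) (FreeAlgebra.ι k 0)

noncomputable def x : RingQuot (Rel17 k μ) := RingQuot.mkAlgHom k (Rel17 k μ) (FreeAlgebra.ι k 1)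

noncomputable def monomial (p : Fin 8 × Fin 2) : RingQuot (Rel17 k μ) :=
  g k μ ^ (p.1 : ℕ) * x k μ ^ (p.2 : ℕ)

theorem g_pow_eight : g k μ ^ 8 = 1 :=
  (map_pow _ _ _).symm.trans ((RingQuot.mkAlgHom_rel k gord).trans (map_one _))

theorem x_mul_g : x k μ * g k μ = g k μ * x k μ - g k μ + g k μ ^ (μ + 1) := by
  have h := RingQuot.mkAlgHom_rel k (comm (k := k) (μ := μ))
  simp only [map_sub, map_mul, map_pow, map_one] at h
  change g k μ * x k μ - x k μ * g k μ = g k μ * (1 - g k μ ^ μ) at h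
  calc x k μ * g k μ = g k μ * x k μ - (g k μ * x k μ - x k μ * g k μ) := by abel
    _ = g k μ * x k μ - g k μ + g k μ ^ (μ + 1) := by rw [h, mul_sub, mul_one, ← pow_succ']; abel

theorem x_sq : x k μ ^ 2 = (μ % 2) • x k μ :=
  (map_pow _ _ _).symm.trans ((RingQuot.mkAlgHom_rel k xsq).trans (map_nsmul _ _ _))

theorem adjoin_g_x : Algebra.adjoin k {g k μ, x k μ} = ⊤ := by
  rw [← RingQuot.adjoin_range_mkAlgHom_ι (Rel17 k μ)]
  congr 1
  ext
  simp [Fin.exists_fin_two, g, x, eq_comm]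

theorem g_pow_mul_x_pow_mem_span (n : ℕ) (j : Fin 2) :
    g k μ ^ n * x k μ ^ (j : ℕ) ∈ Submodule.span k (Set.range (monomial k μ)) := by
  rw [pow_eq_pow_mod n (g_pow_eight k μ)]
  exact Submodule.subset_span ⟨(⟨n % 8, Nat.mod_lt n (by norm_num)⟩, j), rfl⟩

theorem span_monomial : Submodule.span k (Set.range (monomial k μ)) = ⊤ := by
  have mem n j := g_pow_mul_x_pow_mem_span k μ n j
  simp only [Fin.forall_fin_two, Fin.val_zero, Fin.val_one, pow_zero, mul_one, pow_one] at mem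
  refine Submodule.span_eq_top_of_mul_mem (adjoin_g_x k μ) (by simpa using (mem 0).1) ?_
  rintro _ ⟨⟨i, j⟩, rfl⟩ a (rfl | rfl) <;> fin_cases j <;>
    simp only [monomial, pow_zero, mul_one, pow_one]
  · exact pow_succ (g k μ) i ▸ (mem _).1
  · rw [mul_assoc, x_mul_g, mul_add, mul_sub, ← mul_assoc, ← pow_succ, ← pow_add]
    exact Submodule.add_mem _ (Submodule.sub_mem _ (mem _).2 (mem _).1) (mem _).1
  · exact (mem i).2
  · rw [mul_assoc, ← sq, x_sq, mul_smul_comm]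
    exact Submodule.smul_mem _ _ (mem i).2

end Spanning

section Representation

variable {k : Type*} [Field k] {μ : ℕ} {R : Type*} [CommRing R] [Algebra k R]
  (D : Derivation k R R) (r : R)

/-- `RingQuot (Rel17 k μ)` acting on `R[x; D] / (x² - (μ mod 2) x)` by left multiplication,
with `g ↦ r`. -/
noncomputable def toEnd (hr : r ^ 8 = 1) (hDr : D r = r ^ (μ + 1) - r) (h2 : (2 : R) = 0)
    (hD : ∀ s, D (D s) = ((μ % 2 : ℕ) : k) • D s) :
    RingQuot (Rel17 k μ) →ₐ[k] Module.End k (R × R) :=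
  RingQuot.liftAlgHom k
    ⟨FreeAlgebra.lift k ![Module.toModuleEnd k (R × R) r, D.xAction ((μ % 2 : ℕ) : k)], by
      rintro _ _ ⟨⟩ <;>
        simp only [map_pow, map_mul, map_sub, map_one, map_nsmul, FreeAlgebra.lift_ι_apply,
          Matrix.cons_val_zero, Matrix.cons_val_one]
      · rw [← map_pow, hr, map_one]
      · rw [D.toModuleEnd_mul_xAction_sub, hDr, ← map_pow,
          ← map_one (Module.toModuleEnd k (S := R) (R × R)), ← map_sub, ← map_mul, ← map_neg]
        congr 1
        ring
      · rw [D.xAction_sq _ h2 hD, Nat.cast_smul_eq_nsmul]⟩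

variable {D r}

theorem toEnd_monomial_apply (hr : r ^ 8 = 1) (hDr : D r = r ^ (μ + 1) - r) (h2 : (2 : R) = 0)
    (hD : ∀ s, D (D s) = ((μ % 2 : ℕ) : k) • D s) (p : Fin 8 × Fin 2) :
    toEnd D r hr hDr h2 hD (monomial k μ p) (1, 0) =
      if p.2 = 0 then (r ^ (p.1 : ℕ), 0) else (0, r ^ (p.1 : ℕ)) := by
  obtain ⟨i, j⟩ := p
  have hg (n : ℕ) :
      toEnd D r hr hDr h2 hD (g k μ ^ n) = Module.toModuleEnd k (R × R) (r ^ n) := by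
    rw [map_pow, map_pow, g, toEnd, RingQuot.liftAlgHom_mkAlgHom_apply]
    simp
  have hx : toEnd D r hr hDr h2 hD (x k μ) = D.xAction ((μ % 2 : ℕ) : k) := by
    simp [toEnd, x]
  fin_cases j <;> simp [monomial, map_mul, hg, hx]

theorem linearIndependent_monomial_of_linearIndependent_pow (hr : r ^ 8 = 1)
    (hDr : D r = r ^ (μ + 1) - r) (h2 : (2 : R) = 0) (hD : ∀ s, D (D s) = ((μ % 2 : ℕ) : k) • D s)
    (hli : LinearIndependent k fun i : Fin 8 => r ^ (i : ℕ)) :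
    LinearIndependent k (monomial k μ) := by
  let φ := LinearMap.applyₗ (R := k) ((1, 0) : R × R) ∘ₗ (toEnd D r hr hDr h2 hD).toLinearMap
  let e (p : Fin 8 × Fin 2) : Fin 8 ⊕ Fin 8 := if p.2 = 0 then .inl p.1 else .inr p.1
  have he : e.Injective := by
    rintro ⟨i, j⟩ ⟨i', j'⟩
    fin_cases j <;> fin_cases j' <;> simp [e]
  have hφ : φ ∘ monomial k μ =
      Sum.elim (LinearMap.inl k R R ∘ fun i : Fin 8 => r ^ (i : ℕ))
        (LinearMap.inr k R R ∘ fun i : Fin 8 => r ^ (i : ℕ)) ∘ e := by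
    ext ⟨i, j⟩ <;> fin_cases j <;> simp [φ, e, toEnd_monomial_apply]
  exact .of_comp φ (hφ ▸ (linearIndependent_inl_union_inr' hli hli).comp e he)

end Representation

section CyclicModel

open AdjoinRoot

variable (k : Type*) [Field k] (μ : ℕ)

theorem root_pow_eight : root (X ^ 8 - C 1 : k[X]) ^ 8 = 1 := by
  have h := mk_self (f := (X ^ 8 - C 1 : k[X]))
  rwa [map_sub, map_pow, mk_X, mk_C, map_one, sub_eq_zero] at h

variable [CharP k 2]

theorem derivative_X_pow_eight_sub_one : derivative (X ^ 8 - C 1 : k[X]) = 0 := by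
  have h8 : (8 : k) = 0 := by
    simpa using (CharP.cast_eq_zero_iff k 2 8).2 (by norm_num)
  simp only [derivative_sub, derivative_X_pow, derivative_C, Nat.cast_ofNat, h8, map_zero,
    zero_mul, sub_zero]

noncomputable def cyclicDerivation :
    Derivation k (AdjoinRoot (X ^ 8 - C 1 : k[X])) (AdjoinRoot (X ^ 8 - C 1 : k[X])) :=
  mkDerivation (X ^ (μ + 1) - X)
    (by rw [derivative_X_pow_eight_sub_one, zero_mul]; exact dvd_zero _)

theorem cyclicDerivation_root :
    cyclicDerivation k μ (root _) = root (X ^ 8 - C 1 : k[X]) ^ (μ + 1) - root _ := by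
  simp [cyclicDerivation]

theorem cyclicDerivation_cyclicDerivation (hμ : μ = 1 ∨ μ = 4)
    (s : AdjoinRoot (X ^ 8 - C 1 : k[X])) :
    cyclicDerivation k μ (cyclicDerivation k μ s) = ((μ % 2 : ℕ) : k) • cyclicDerivation k μ s := by
  suffices (cyclicDerivation k μ).compSelf (two_eq_zero_of_charTwo k _) =
      ((μ % 2 : ℕ) : k) • cyclicDerivation k μ from congr($this s)
  refine derivation_ext ?_
  have h2 := two_eq_zero_of_charTwo k (AdjoinRoot (X ^ 8 - C 1 : k[X]))
  have h8 := root_pow_eight k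
  rcases hμ with rfl | rfl <;>
    simp only [Derivation.compSelf_apply, cyclicDerivation_root, map_sub, Derivation.leibniz_pow,
      Derivation.smul_apply, Algebra.smul_def] <;>
    norm_num <;>
    generalize root (X ^ 8 - C 1 : k[X]) = r at h8 ⊢
  -- `D (D X) = ((μ + 1) X^μ - 1) D X`: this is `-D X` for `μ = 1`, and for `μ = 4` it is
  -- `X (X⁴ - 1)² = X (X⁸ - 1) - 2 X⁵ + 2 X`.
  · linear_combination (r * (r ^ 2 - r) - (r ^ 2 - r)) * h2
  · linear_combination 5 * r * h8 + 3 * (r - r ^ 5) * h2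

theorem linearIndependent_monomial (hμ : μ = 1 ∨ μ = 4) :
    LinearIndependent k (monomial k μ) := by
  have hli := linearIndependent_root_pow (monic_X_pow_sub_C (1 : k) (by norm_num : 8 ≠ 0))
  rw [natDegree_X_pow_sub_C] at hli
  exact linearIndependent_monomial_of_linearIndependent_pow (root_pow_eight k)
    (cyclicDerivation_root k μ) (two_eq_zero_of_charTwo k _)
    (cyclicDerivation_cyclicDerivation k μ hμ) hli

end CyclicModel

end Rel17

theorem dim_sixteen_rank_one (k : Type*) [Field k] [CharP k 2]
    (μ : ℕ) (hμ : μ = 1 ∨ μ = 4) :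
    (∃ b : Module.Basis (Fin 8 × Fin 2) k (RingQuot (Rel17 k μ)),
        ∀ i : Fin 8, ∀ j : Fin 2,
          b (i, j) = RingQuot.mkAlgHom k (Rel17 k μ) (FreeAlgebra.ι k 0) ^ (i : ℕ) *
            RingQuot.mkAlgHom k (Rel17 k μ) (FreeAlgebra.ι k 1) ^ (j : ℕ)) ∧
      Module.finrank k (RingQuot (Rel17 k μ)) = 16 := by
  let b := Module.Basis.mk (Rel17.linearIndependent_monomial k μ hμ) (Rel17.span_monomial k μ).ge
  refine ⟨⟨b, fun i j => Module.Basis.mk_apply _ _ _⟩, ?_⟩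
  rw [Module.finrank_eq_card_basis b]
  simp
end
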